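/- Every orientation D of a path P_n admits a minimum dominator coloring (i.e., a dominator coloring using exactly χ_d(D) colors) in which all vertices of in-degree zero receive the same color. -/

import Mathlib

/-!
Start from any minimum dominator coloring `c`. Call a color *dominated* if some vertex
dominates its class; the color of a source is never dominated. If two sources have distinct
colors `a ≠ b`, recolor every vertex of undominated color: sources get `a`, all others `b`.
Dominated classes are untouched, so domination survives, and properness can only fail on an
arc `u → v` between two recolored vertices. But `u` dominates a class, hence has an
out-neighbor of dominated color besides `v`; on a path a vertex with two out-neighbors is a
source, so `u` gets `a` while `v`, having an in-neighbor, gets `b`.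
-/

/-- A vertex `v` dominates the color class of color `a` under coloring `c`:
the class is nonempty and every vertex of that color is an out-neighbor of `v`. -/
def Dominates {V α : Type*} (A : V → V → Prop) (c : V → α) (v : V) (a : α) : Prop :=
  (∃ w, c w = a) ∧ ∀ w, c w = a → A v w

/-- A dominator coloring of the digraph with arc relation `A`: a proper coloring
such that every vertex with positive out-degree dominates some color class. -/
def IsDominatorColoring {V α : Type*} (A : V → V → Prop) (c : V → α) : Prop :=
  (∀ u v, A u v → c u ≠ c v) ∧ ∀ v, (∃ w, A v w) → ∃ a, Dominates A c v a

/-- The dominator chromatic number: the least `k` admitting a dominator coloring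
with colors in `Fin k`. -/
noncomputable def domChrom {V : Type*} (A : V → V → Prop) : ℕ :=
  sInf {k | ∃ c : V → Fin k, IsDominatorColoring A c}

/-- The arc relation of the orientation of the path `P_n` (vertices `0,…,n-1`)
determined by `o`: the edge between `i` and `i+1` is directed `i → i+1`
when `o i = true` and `i+1 → i` when `o i = false`. -/
def pathArc (n : ℕ) (o : ℕ → Bool) (u v : Fin n) : Prop :=
  ((u : ℕ) + 1 = (v : ℕ) ∧ o u = true) ∨ ((v : ℕ) + 1 = (u : ℕ) ∧ o v = false)

/-- The minimum of the dominator chromatic number over all orientations of `P_n`. -/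
noncomputable def minDomChromPath (n : ℕ) : ℕ :=
  sInf {m | ∃ o : ℕ → Bool, m = domChrom (pathArc n o)}

section

variable {V α : Type*} {A : V → V → Prop} {c : V → α}

def IsDominatedColor (A : V → V → Prop) (c : V → α) (a : α) : Prop :=
  ∃ v, Dominates A c v a

lemma not_isDominatedColor_of_source {v : V} (hv : ¬ ∃ w, A w v) :
    ¬ IsDominatedColor A c (c v) :=
  fun ⟨w, hw⟩ => hv ⟨w, hw.2 v rfl⟩

lemma IsDominatorColoring.of_injective (hA : ∀ v, ¬ A v v) (hc : Function.Injective c) :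
    IsDominatorColoring A c := by
  refine ⟨fun u v huv h => hA u (hc h ▸ huv), fun v ⟨w, hvw⟩ => ⟨c w, ?_⟩⟩
  exact And.intro ⟨w, rfl⟩ fun x hx => by rwa [hc hx]

lemma exists_isDominatorColoring_domChrom [Finite V] (hA : ∀ v, ¬ A v v) :
    ∃ c : V → Fin (domChrom A), IsDominatorColoring A c :=
  Nat.sInf_mem (s := {k | ∃ c : V → Fin k, IsDominatorColoring A c})
    ⟨_, Finite.equivFin V, IsDominatorColoring.of_injective hA (Finite.equivFin V).injective⟩

lemma IsDominatorColoring.exists_out_ne (hc : IsDominatorColoring A c) {u v : V} (huv : A u v)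
    (hv : ¬ IsDominatedColor A c (c v)) : ∃ x, A u x ∧ x ≠ v := by
  obtain ⟨d, ⟨x, hx⟩, hd⟩ := hc.2 u ⟨v, huv⟩
  refine ⟨x, hd x hx, ?_⟩
  rintro rfl
  exact hv ⟨u, hx ▸ ⟨⟨x, hx⟩, hd⟩⟩

open Classical in
noncomputable def sourceRecolor (A : V → V → Prop) (c : V → α) (a b : α) (v : V) : α :=
  if IsDominatedColor A c (c v) then c v else if ∃ w, A w v then b else a

lemma sourceRecolor_of_source {a b : α} {v : V} (hv : ¬ ∃ w, A w v) :
    sourceRecolor A c a b v = a := by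
  simp [sourceRecolor, not_isDominatedColor_of_source hv, hv]

lemma isDominatorColoring_sourceRecolor (hc : IsDominatorColoring A c) {a b : α} (hab : a ≠ b)
    (ha : ¬ IsDominatedColor A c a) (hb : ¬ IsDominatedColor A c b)
    (hsrc : ∀ u v, A u v → ¬ IsDominatedColor A c (c v) → ¬ ∃ w, A w u) :
    IsDominatorColoring A (sourceRecolor A c a b) := by
  have hfree : ∀ v, ¬ IsDominatedColor A c (c v) →
      ¬ IsDominatedColor A c (sourceRecolor A c a b v) := by
    intro v hv
    by_cases hin : ∃ w, A w v <;> simp [sourceRecolor, hv, hin, ha, hb]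
  have hkeep : ∀ v, IsDominatedColor A c (c v) → sourceRecolor A c a b v = c v := by
    intro v hv
    simp [sourceRecolor, hv]
  refine ⟨fun u v huv heq => ?_, fun v hv => ?_⟩
  · by_cases hu : IsDominatedColor A c (c u) <;> by_cases hv : IsDominatedColor A c (c v)
    · exact hc.1 u v huv (by rwa [hkeep u hu, hkeep v hv] at heq)
    · exact hfree v hv (heq ▸ hkeep u hu ▸ hu)
    · exact hfree u hu (heq ▸ hkeep v hv ▸ hv)
    · have hvin : ∃ w, A w v := ⟨u, huv⟩
      rw [sourceRecolor_of_source (hsrc u v huv hv)] at heq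
      simp only [sourceRecolor, hv, hvin, if_false, if_true] at heq
      exact hab heq
  · obtain ⟨d, ⟨x, hx⟩, hd⟩ := hc.2 v hv
    have hdom : IsDominatedColor A c d := ⟨v, ⟨x, hx⟩, hd⟩
    refine ⟨d, ⟨x, by rw [hkeep x (hx ▸ hdom), hx]⟩, fun w hw => hd w ?_⟩
    by_cases hw' : IsDominatedColor A c (c w)
    · rwa [← hkeep w hw']
    · exact absurd (hw ▸ hdom) (hfree w hw')

end

lemma pathArc_irrefl (n : ℕ) (o : ℕ → Bool) (v : Fin n) : ¬ pathArc n o v v := by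
  simp [pathArc]

lemma pathArc_source_of_out_ne {n : ℕ} {o : ℕ → Bool} {u v x : Fin n}
    (hv : pathArc n o u v) (hx : pathArc n o u x) (hvx : v ≠ x) : ¬ ∃ w, pathArc n o w u := by
  rintro ⟨w, hw⟩
  simp only [pathArc] at *
  grind

theorem exists_min_dominator_coloring_indegree_zero_same_color (n : ℕ) (o : ℕ → Bool) :
    ∃ c : Fin n → Fin (domChrom (pathArc n o)),
      IsDominatorColoring (pathArc n o) c ∧
      ∀ u v : Fin n, (¬ ∃ w, pathArc n o w u) → (¬ ∃ w, pathArc n o w v) → c u = c v := by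
  obtain ⟨c, hc⟩ := exists_isDominatorColoring_domChrom (pathArc_irrefl n o)
  by_cases hsame :
      ∀ u v : Fin n, (¬ ∃ w, pathArc n o w u) → (¬ ∃ w, pathArc n o w v) → c u = c v
  · exact ⟨c, hc, hsame⟩
  simp only [not_forall] at hsame
  obtain ⟨s, t, hs, ht, hst⟩ := hsame
  refine ⟨sourceRecolor (pathArc n o) c (c s) (c t),
    isDominatorColoring_sourceRecolor hc hst (not_isDominatedColor_of_source hs)
      (not_isDominatedColor_of_source ht) fun u v huv hv => ?_,
    fun u v hu hv => by rw [sourceRecolor_of_source hu, sourceRecolor_of_source hv]⟩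
  obtain ⟨x, hux, hxv⟩ := hc.exists_out_ne huv hv
  exact pathArc_source_of_out_ne huv hux hxv.symm
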